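/- Let A be a ⊖-algebra. For all a, b ∈ A and every prime ideal x of A: a ⊖ b ∉ x if and only if there exists a prime ideal w of A with b ∈ w, (x, w) ∈ dom(+), and a ∉ x + w (that is, a ⊖ c ∉ x for every c ∈ w). -/
import Mathlib


class OminusAlgebra (A : Type*) extends DistribLattice A, BoundedOrder A where
  ominus : A → A → A
  inf_ominus : ∀ a b c : A, ominus (a ⊓ b) c = ominus a c ⊓ ominus b c
  sup_ominus : ∀ a b c : A, ominus (a ⊔ b) c = ominus a c ⊔ ominus b c
  ominus_inf : ∀ a b c : A, ominus a (b ⊓ c) = ominus a b ⊔ ominus a c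
  ominus_sup : ∀ a b c : A, ominus a (b ⊔ c) = ominus a b ⊓ ominus a c
  bot_ominus : ∀ a : A, ominus ⊥ a = ⊥
  ominus_top : ∀ a : A, ominus a ⊤ = ⊥
  ominus_bot : ∀ a : A, ominus a ⊥ = a

infixl:65 " ⊖ " => OminusAlgebra.ominus

variable {A : Type*} [OminusAlgebra A]

def oneg (a : A) : A := ⊤ ⊖ a

def oplus (a b : A) : A := oneg (oneg a ⊖ b)

def IsPrimeIdeal (x : Set A) : Prop :=
  x.Nonempty ∧ (∀ a b : A, a ≤ b → b ∈ x → a ∈ x) ∧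
    (∀ a b : A, a ∈ x → b ∈ x → a ⊔ b ∈ x) ∧ x ≠ Set.univ ∧
    (∀ a b : A, a ⊓ b ∈ x → a ∈ x ∨ b ∈ x)

def ineg (x : Set A) : Set A := {a | oneg a ∉ x}

def domPlus (x y : Set A) : Prop := y ⊆ ineg x

def pplus (x y : Set A) : Set A := {a | ∃ b ∈ y, a ⊖ b ∈ x}

def domStar (x y : Set A) : Prop := ¬ ineg x ⊆ y

def pstar (x y : Set A) : Set A := {a | ∀ b ∉ y, a ⊖ b ∈ x}

section Aux
variable {A : Type*} [OminusAlgebra A]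

open OminusAlgebra

lemma ominus_mono_left {a b : A} (h : a ≤ b) (c : A) : a ⊖ c ≤ b ⊖ c := by
  have := inf_ominus a b c
  rw [inf_eq_left.mpr h] at this
  rw [this]; exact inf_le_right

lemma ominus_anti_right (a : A) {c d : A} (h : c ≤ d) : a ⊖ d ≤ a ⊖ c := by
  have := ominus_sup a c d
  rw [sup_eq_right.mpr h] at this
  rw [this]; exact inf_le_left

theorem stmt4_aux {A : Type*} [OminusAlgebra A] (a b : A) (x : Set A) (hx : IsPrimeIdeal x)
    (hab : a ⊖ b ∉ x) :
    ∃ w : Set A, IsPrimeIdeal w ∧ b ∈ w ∧ domPlus x w ∧ a ∉ pplus x w := by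
  obtain ⟨hne, hdown, hsup, hproper, hprime⟩ := hx
  have hbotx : (⊥ : A) ∈ x := by
    obtain ⟨c, hc⟩ := hne; exact hdown ⊥ c bot_le hc
  -- the filter G
  set G : Set A := {c | a ⊖ c ∈ x ∨ oneg c ∈ x} with hG
  have hGfilter : Order.IsPFilter G := by
    apply Order.IsPFilter.of_def
    · exact ⟨⊤, Or.inl (by rw [ominus_top]; exact hbotx)⟩
    · intro c hc d hd
      refine ⟨c ⊓ d, ?_, inf_le_left, inf_le_right⟩
      have h1 : a ⊖ (c ⊓ d) = (a ⊖ c) ⊔ (a ⊖ d) := ominus_inf a c d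
      have h2 : oneg (c ⊓ d) = oneg c ⊔ oneg d := ominus_inf ⊤ c d
      have key : ∀ e : A, oneg e ∈ x → a ⊖ e ∈ x := fun e he =>
        hdown _ _ (ominus_mono_left le_top e) he
      rcases hc with hc | hc <;> rcases hd with hd | hd
      · exact Or.inl (by rw [h1]; exact hsup _ _ hc hd)
      · exact Or.inl (by rw [h1]; exact hsup _ _ hc (key d hd))
      · exact Or.inl (by rw [h1]; exact hsup _ _ (key c hc) hd)
      · exact Or.inr (by rw [h2]; exact hsup _ _ hc hd)
    · intro c d hcd hc
      rcases hc with hc | hc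
      · exact Or.inl (hdown _ _ (ominus_anti_right a hcd) hc)
      · exact Or.inr (hdown _ _ (ominus_anti_right ⊤ hcd) hc)
  set F : Order.PFilter A := hGfilter.toPFilter with hF
  have hFmem : ∀ c : A, c ∈ F ↔ c ∈ G := fun c => Iff.rfl
  set I : Order.Ideal A := Order.Ideal.principal b with hI
  have hdisj : Disjoint (F : Set A) (I : Set A) := by
    rw [Set.disjoint_left]
    intro c hcF hcI
    have hcb : c ≤ b := (Order.Ideal.mem_principal).mp hcI
    rcases (hFmem c).mp hcF with hc | hc
    · exact hab (hdown _ _ (ominus_anti_right a hcb) hc)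
    · exact hab (hdown _ _ (le_trans (ominus_mono_left le_top b)
        (ominus_anti_right ⊤ hcb)) hc)
  obtain ⟨J, hJprime, hIJ, hJF⟩ := DistribLattice.prime_ideal_of_disjoint_filter_ideal hdisj
  refine ⟨(J : Set A), ?_, ?_, ?_, ?_⟩
  · refine ⟨J.nonempty, fun c d h hd => J.lower h hd, fun c d hc hd => J.sup_mem hc hd, ?_,
      fun c d h => hJprime.mem_or_mem h⟩
    intro h
    have : (⊤ : A) ∈ (J : Set A) := h ▸ Set.mem_univ ⊤
    exact (Set.disjoint_left.mp hJF
      ((hFmem ⊤).mpr (Or.inl (by rw [ominus_top]; exact hbotx)))) this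
  · exact hIJ (Order.Ideal.mem_principal.mpr le_rfl)
  · intro c hc
    have : c ∉ G := fun hcG => Set.disjoint_left.mp hJF ((hFmem c).mpr hcG) hc
    simp only [hG, Set.mem_setOf_eq, not_or] at this
    exact this.2
  · rintro ⟨c, hc, hac⟩
    have : c ∉ G := fun hcG => Set.disjoint_left.mp hJF ((hFmem c).mpr hcG) hc
    simp only [hG, Set.mem_setOf_eq, not_or] at this
    exact this.1 hac

end Aux

theorem stmt4 {A : Type*} [OminusAlgebra A] (a b : A) (x : Set A) (hx : IsPrimeIdeal x) :
    a ⊖ b ∉ x ↔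
      ∃ w : Set A, IsPrimeIdeal w ∧ b ∈ w ∧ domPlus x w ∧ a ∉ pplus x w := by
  constructor
  · exact stmt4_aux a b x hx
  · rintro ⟨w, hw, hbw, hdom, hna⟩ hab
    exact hna ⟨b, hbw, hab⟩
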